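/- A right quasi-split exact sequence of triangulated categories T →i T' →p T'' is exact: the composite p∘i is isomorphic to the zero functor, the functor i induces an equivalence of triangulated categories between T and Ker p (the full subcategory of T' of objects y such that p(y) is isomorphic to the zero object), and the induced functor T'/Ker p → T'' on the Verdier quotient is an equivalence of triangulated categories. -/

import Mathlib

/-!
The adjunction `i ⊣ q` has invertible unit, so `i` is fully faithful and its essential image
consists of the `y` at which the counit `A_y` is invertible; by the distinguished triangle
`i q y → y → j p y → ` these are the `y` with `j p y = 0`, i.e. with `p y = 0`, since `j` is a
fully faithful right adjoint. The adjunction `p ⊣ j` has invertible counit, so `p` is a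
localization at the morphisms it inverts, and for a triangulated functor these are exactly the
morphisms whose cone lies in `Ker p`. Two localizations at the same class of morphisms differ
by an equivalence.
-/

open CategoryTheory CategoryTheory.Limits CategoryTheory.Pretriangulated

universe w v u v₂ u₂ v₃ u₃ v₄ u₄

/-- The class of morphisms of `C` whose cone lies in `P`; the Verdier quotient of `C`
by the (triangulated) subcategory `P` is the localization of `C` at `coneIn P`. -/
def coneIn {C : Type u} [Category.{v} C] [HasZeroObject C] [HasShift C ℤ]
    [Preadditive C] [∀ n : ℤ, (shiftFunctor C n).Additive] [Pretriangulated C]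
    (P : C → Prop) : MorphismProperty C :=
  fun X Y f => ∃ (Z : C) (g : Y ⟶ Z) (h : Z ⟶ X⟦(1 : ℤ)⟧),
    (Triangle.mk f g h ∈ distTriang C) ∧ P Z

namespace CategoryTheory

section

variable {C : Type*} [Category C] [HasZeroObject C] [HasShift C ℤ] [Preadditive C]
  [∀ n : ℤ, (shiftFunctor C n).Additive] [Pretriangulated C]

lemma coneIn_eq_trW (P : ObjectProperty C) : coneIn P = P.trW := by
  ext X Y f
  simp only [coneIn, ObjectProperty.trW_iff, exists_prop]

lemma ObjectProperty.trW_isZero :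
    ObjectProperty.trW (IsZero (C := C)) = MorphismProperty.isomorphisms C := by
  ext X Y f
  obtain ⟨Z, g, h, hT⟩ := distinguished_cocone_triangle f
  exact (ObjectProperty.trW_iff_of_distinguished _ _ hT).trans
    (Triangle.isZero₃_iff_isIso₁ _ hT)

variable {D : Type*} [Category D] [HasZeroObject D] [HasShift D ℤ] [Preadditive D]
  [∀ n : ℤ, (shiftFunctor D n).Additive] [Pretriangulated D]
  (F : C ⥤ D) [F.CommShift ℤ] [F.IsTriangulated]

lemma Functor.trW_kernel :
    F.kernel.trW = (MorphismProperty.isomorphisms D).inverseImage F := by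
  ext X Y f
  rw [ObjectProperty.inverseImage_trW_iff, ObjectProperty.trW_isZero]
  rfl

lemma Adjunction.isLocalization_trW_kernel {G : D ⥤ C} (adj : F ⊣ G) [G.Full] [G.Faithful] :
    F.IsLocalization F.kernel.trW := by
  rw [F.trW_kernel]
  exact adj.isLocalization

end

lemma Localization.isEquivalence_of_comp_iso {C D₁ D₂ : Type*} [Category C] [Category D₁]
    [Category D₂] (L₁ : C ⥤ D₁) (L₂ : C ⥤ D₂) (W : MorphismProperty C)
    [L₁.IsLocalization W] [L₂.IsLocalization W] (H : D₁ ⥤ D₂) (e : L₁ ⋙ H ≅ L₂) :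
    H.IsEquivalence :=
  Functor.isEquivalence_of_iso (Localization.isoUniqFunctor L₁ L₂ W H e).symm

lemma Functor.isZero_obj_iff {C D : Type*} [Category C] [Category D] [HasZeroMorphisms C]
    [HasZeroMorphisms D] (G : C ⥤ D) [G.PreservesZeroMorphisms] [G.Full] [G.Faithful] (X : C) :
    IsZero (G.obj X) ↔ IsZero X :=
  ⟨IsZero.of_full_of_faithful_of_isZero G X, G.map_isZero⟩

lemma isZero_obj_iff_mem_essImage_of_distTriang
    {T₁ : Type*} [Category T₁]
    {T₂ : Type*} [Category T₂] [HasZeroObject T₂] [HasShift T₂ ℤ] [Preadditive T₂]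
    [∀ n : ℤ, (shiftFunctor T₂ n).Additive] [Pretriangulated T₂]
    {T₃ : Type*} [Category T₃] [HasZeroMorphisms T₃]
    {i : T₁ ⥤ T₂} {q : T₂ ⥤ T₁} (adj : i ⊣ q) [i.Full] [i.Faithful]
    (p : T₂ ⥤ T₃) {j : T₃ ⥤ T₂} [j.PreservesZeroMorphisms] [j.Full] [j.Faithful]
    (hT : ∀ y : T₂, ∃ (g : y ⟶ j.obj (p.obj y))
      (h : j.obj (p.obj y) ⟶ (i.obj (q.obj y))⟦(1 : ℤ)⟧),
        Triangle.mk (adj.counit.app y) g h ∈ distTriang T₂)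
    (y : T₂) : IsZero (p.obj y) ↔ i.essImage y := by
  obtain ⟨g, h, hT⟩ := hT y
  calc IsZero (p.obj y)
      ↔ IsZero (j.obj (p.obj y)) := (j.isZero_obj_iff _).symm
    _ ↔ IsIso (adj.counit.app y) := Triangle.isZero₃_iff_isIso₁ _ hT
    _ ↔ i.essImage y := adj.isIso_counit_app_iff_mem_essImage

end CategoryTheory

/-- A right quasi-split exact sequence of triangulated categories
`T₁ →i T₂ →p T₃` is exact: `p ∘ i` is isomorphic to the zero functor, `i` induces an
equivalence of `T₁` with `Ker p` (i.e. `i` is fully faithful and its essential image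
is exactly the objects `y` with `p(y)` zero), and the induced functor
`T₂/Ker p → T₃` is an equivalence of (triangulated) categories, where `T₂/Ker p` is
modelled by a localization `R : T₂ ⥤ V` of `T₂` at the morphisms whose cone lies in
`Ker p`, and the induced functor by any `H : V ⥤ T₃` with `R ⋙ H ≅ p`. -/
theorem right_quasi_split_is_exact
    {T₁ : Type u} [Category.{v} T₁] [HasZeroObject T₁] [HasShift T₁ ℤ] [Preadditive T₁]
    [∀ n : ℤ, (shiftFunctor T₁ n).Additive] [Pretriangulated T₁] [IsTriangulated T₁]
    {T₂ : Type u₂} [Category.{v₂} T₂] [HasZeroObject T₂] [HasShift T₂ ℤ] [Preadditive T₂]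
    [∀ n : ℤ, (shiftFunctor T₂ n).Additive] [Pretriangulated T₂] [IsTriangulated T₂]
    {T₃ : Type u₃} [Category.{v₃} T₃] [HasZeroObject T₃] [HasShift T₃ ℤ] [Preadditive T₃]
    [∀ n : ℤ, (shiftFunctor T₃ n).Additive] [Pretriangulated T₃] [IsTriangulated T₃]
    (i : T₁ ⥤ T₂) [i.CommShift ℤ] [i.IsTriangulated]
    (p : T₂ ⥤ T₃) [p.CommShift ℤ] [p.IsTriangulated]
    (q : T₂ ⥤ T₁) [q.CommShift ℤ] [q.IsTriangulated]
    (j : T₃ ⥤ T₂) [j.CommShift ℤ] [j.IsTriangulated]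
    (A : q ⋙ i ⟶ 𝟭 T₂) (B : 𝟭 T₁ ⟶ i ⋙ q)
    (Cc : 𝟭 T₂ ⟶ p ⋙ j) (Dd : j ⋙ p ⟶ 𝟭 T₃)
    (E : p ⋙ j ⟶ (q ⋙ i) ⋙ shiftFunctor T₂ (1 : ℤ))
    -- triangle identities for the adjunction `i ⊣ q`
    (hiq₁ : ∀ x : T₁, i.map (B.app x) ≫ A.app (i.obj x) = 𝟙 (i.obj x))
    (hiq₂ : ∀ y : T₂, B.app (q.obj y) ≫ q.map (A.app y) = 𝟙 (q.obj y))
    -- triangle identities for the adjunction `p ⊣ j`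
    (hpj₁ : ∀ y : T₂, p.map (Cc.app y) ≫ Dd.app (p.obj y) = 𝟙 (p.obj y))
    (hpj₂ : ∀ z : T₃, Cc.app (j.obj z) ≫ j.map (Dd.app z) = 𝟙 (j.obj z))
    -- `B` and `Dd` are natural isomorphisms
    (hB : ∀ x : T₁, IsIso (B.app x)) (hDd : ∀ z : T₃, IsIso (Dd.app z))
    -- the triangles `(A_y, Cc_y, E_y)` are distinguished
    (hE : ∀ y : T₂, Triangle.mk (A.app y) (Cc.app y) (E.app y) ∈ distTriang T₂)
    -- the Verdier quotient `T₂ / Ker p`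
    {V : Type u₄} [Category.{v₄} V] (R : T₂ ⥤ V)
    [R.IsLocalization (coneIn (fun y : T₂ => IsZero (p.obj y)))] :
    -- `p ∘ i` is trivial
    (∀ x : T₁, IsZero (p.obj (i.obj x))) ∧
    -- `i` induces an equivalence of `T₁` with `Ker p`
    (i.Full ∧ i.Faithful ∧
      ∀ y : T₂, (IsZero (p.obj y) ↔ ∃ x : T₁, Nonempty (y ≅ i.obj x))) ∧
    -- the induced functor `T₂/Ker p → T₃` exists and is an equivalence
    ((∃ H : V ⥤ T₃, Nonempty (R ⋙ H ≅ p)) ∧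
      (∀ H : V ⥤ T₃, Nonempty (R ⋙ H ≅ p) → H.IsEquivalence)) := by
  let adjiq : i ⊣ q := ⟨B, A, hiq₁, hiq₂⟩
  let adjpj : p ⊣ j := ⟨Cc, Dd, hpj₁, hpj₂⟩
  have : ∀ x, IsIso (adjiq.unit.app x) := hB
  have : ∀ z, IsIso (adjpj.counit.app z) := hDd
  have := adjiq.full_L_of_isSplitEpi_unit_app
  have := adjiq.faithful_L_of_mono_unit_app
  have := adjpj.full_R_of_isSplitMono_counit_app
  have := adjpj.faithful_R_of_epi_counit_app
  have ker := isZero_obj_iff_mem_essImage_of_distTriang adjiq p fun y => ⟨_, _, hE y⟩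
  have : R.IsLocalization p.kernel.trW := by rwa [← coneIn_eq_trW]
  have := adjpj.isLocalization_trW_kernel
  refine ⟨fun x => (ker _).2 (i.obj_mem_essImage x),
    ⟨inferInstance, inferInstance, fun y => ?_⟩,
    ⟨_, ⟨Localization.compUniqFunctor R p p.kernel.trW⟩⟩,
    fun H ⟨e⟩ => Localization.isEquivalence_of_comp_iso R p p.kernel.trW H e⟩
  rw [ker]
  exact ⟨fun ⟨x, ⟨e⟩⟩ => ⟨x, ⟨e.symm⟩⟩, fun ⟨x, ⟨e⟩⟩ => ⟨x, ⟨e.symm⟩⟩⟩
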